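/- (Peller's theorem, discrete case.) There exists an absolute constant c ≥ 0 such that the following holds: Let H be a Hilbert space, let T ∈ L(H) satisfy ‖Tⁿ‖ ≤ M(1+n)^α for all n ≥ 0 (with constants M ≥ 1, α ≥ 0). Then for every polynomial f(z) = Σ_{k=0}^{N} a_k z^k one has ‖Σ_{k=0}^{N} a_k T^k‖ ≤ c · 9^α · M² · Σ_{n=0}^{∞} 2^{2αn} sup_{|z|<1} |Σ_{k} φ_n(k) a_k z^k|, where (φ_n)_{n≥0} is the dyadic partition of unity on ℤ₊ defined in the context. -/

import Mathlib

open MeasureTheory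

/-- The dyadic partition of unity `(φ_n)_{n ≥ 0}` on `ℤ₊`:
`φ_0 = (1,1,0,…)`, and for `n ≥ 1`, `φ_n` is supported in
`[2^{n-1}, 2^{n+1}]`, equals `1` at `2^n`, vanishes at the endpoints and is
linear on `[2^{n-1}, 2^n]` and on `[2^n, 2^{n+1}]`. -/
noncomputable def dyadicPhi (n k : ℕ) : ℝ :=
  if n = 0 then (if k ≤ 1 then 1 else 0)
  else if k ≤ 2 ^ (n - 1) then 0
  else if k ≤ 2 ^ n then ((k : ℝ) - 2 ^ (n - 1)) / 2 ^ (n - 1)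
  else if k ≤ 2 ^ (n + 1) then ((2 : ℝ) ^ (n + 1) - (k : ℝ)) / 2 ^ n
  else 0

/-!
Split `f = ∑ aₖ zᵏ` into the dyadic pieces `fₙ = ∑ φₙ(k) aₖ zᵏ`; since the `φₙ` sum to one,
`f(T) = ∑ₙ fₙ(T)`, and `fₙ` has degree at most `L = 2ⁿ⁺¹` and vanishes to order `σ = ⌊2ⁿ/2⌋` at `0`.

For one such piece `p` with `|p| ≤ S` on the disc, write `pₖ = (k + 1) γₖ`. By the Schwarz lemma
`|p(w)| ≤ |w|^σ S`, so `g(w) = ∑ γₖ wᵏ = ∫₀¹ p(tw) dt` is bounded by `S / (σ + 1)`. Sampling at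
the powers `ωᵗ` of a primitive `(2L+1)`-st root of unity (enough points that `i + j - k` never
aliases for `i, j, k ≤ L`) gives `(2L+1) p(T) = ∑ₜ g(ω̄ᵗ) Qₜ²` with `Qₜ = ∑_{j ≤ L} ωᵗʲ Tʲ`.
Cauchy–Schwarz and the discrete Parseval identity `∑ₜ ‖Qₜ x‖² = (2L+1) ∑ⱼ ‖Tʲ x‖²` (and the same
for the adjoints) yield `‖p(T)‖ ≤ (L + 1)/(σ + 1) · S · max_{j ≤ L} ‖Tʲ‖²`, and
`‖Tʲ‖ ≤ M (3 · 2ⁿ)^α` for `j ≤ L` turns this into `4 · 9^α M² 2^{2αn} S`.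
-/

open Finset Polynomial Metric ComplexConjugate ContinuousLinearMap

lemma dyadicPhi_eq_zero_of_le {n k : ℕ} (hn : n ≠ 0) (hk : k ≤ 2 ^ (n - 1)) :
    dyadicPhi n k = 0 := by
  rw [dyadicPhi, if_neg hn, if_pos hk]

lemma dyadicPhi_eq_zero_of_gt {n k : ℕ} (hk : 2 ^ (n + 1) < k) : dyadicPhi n k = 0 := by
  have hmono : 2 ^ (n - 1) ≤ 2 ^ n := Nat.pow_le_pow_right two_pos (n.sub_le 1)
  have hdouble : 2 ^ (n + 1) = 2 * 2 ^ n := by ring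
  have hpos : 1 ≤ 2 ^ n := Nat.one_le_two_pow
  unfold dyadicPhi
  split_ifs <;> first | rfl | omega

lemma dyadicPhi_add_dyadicPhi_succ {e k : ℕ} (h₁ : 2 ^ e < k) (h₂ : k ≤ 2 ^ (e + 1)) :
    dyadicPhi e k + dyadicPhi (e + 1) k = 1 := by
  rcases Nat.eq_zero_or_pos e with rfl | he
  · obtain rfl : k = 2 := by rw [pow_zero] at h₁; rw [zero_add, pow_one] at h₂; omega
    norm_num [dyadicPhi]
  · obtain ⟨m, rfl⟩ : ∃ m, e = m + 1 := ⟨e - 1, by omega⟩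
    have h : 2 ^ m < 2 ^ (m + 1) := Nat.pow_lt_pow_right one_lt_two (by omega)
    simp only [dyadicPhi, Nat.add_sub_cancel, add_eq_zero, one_ne_zero, and_false, if_false,
      if_neg (show ¬ k ≤ 2 ^ m by omega), if_neg (show ¬ k ≤ 2 ^ (m + 1) by omega), if_pos h₂]
    field_simp
    ring

lemma sum_range_dyadicPhi {k N : ℕ} (hk : k ≤ N) :
    ∑ n ∈ range (N + 2), dyadicPhi n k = 1 := by
  rcases le_or_gt k 1 with hk1 | hk1
  · rw [sum_eq_single 0 (fun n _ hn => dyadicPhi_eq_zero_of_le hn ?_) (by simp)]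
    · simp [dyadicPhi, hk1]
    · exact hk1.trans Nat.one_le_two_pow
  · have he₁ := Nat.pow_log_le_self 2 (show k - 1 ≠ 0 by omega)
    have he₂ := Nat.lt_pow_succ_log_self one_lt_two (k - 1)
    set e := Nat.log 2 (k - 1)
    have heN : e + 1 < N + 2 := by have := Nat.lt_two_pow_self (n := e); omega
    rw [sum_eq_add e (e + 1) (by omega) ?_ (fun h => absurd (mem_range.mpr (by omega)) h)
      (fun h => absurd (mem_range.mpr heN) h), dyadicPhi_add_dyadicPhi_succ (by omega) (by omega)]
    intro n _ ⟨hne, hne'⟩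
    rcases lt_or_gt_of_ne hne with hlt | hgt
    · refine dyadicPhi_eq_zero_of_gt ?_
      have := Nat.pow_le_pow_right two_pos (show n + 1 ≤ e by omega)
      omega
    · refine dyadicPhi_eq_zero_of_le (by omega) ?_
      have := Nat.pow_le_pow_right two_pos (show e + 1 ≤ n - 1 by omega)
      omega

noncomputable def dyadicBlock (N n : ℕ) (a : ℕ → ℂ) : ℂ[X] :=
  ∑ k ∈ range (N + 1), C ((dyadicPhi n k : ℂ) * a k) * X ^ k

section dyadicBlock

variable (N n : ℕ) (a : ℕ → ℂ)

lemma eval_dyadicBlock (z : ℂ) :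
    (dyadicBlock N n a).eval z = ∑ k ∈ range (N + 1), (dyadicPhi n k : ℂ) * a k * z ^ k := by
  simp [dyadicBlock, eval_finsetSum]

lemma aeval_dyadicBlock {𝒜 : Type*} [Ring 𝒜] [Algebra ℂ 𝒜] (x : 𝒜) :
    aeval x (dyadicBlock N n a) = ∑ k ∈ range (N + 1), ((dyadicPhi n k : ℂ) * a k) • x ^ k := by
  simp [dyadicBlock, Algebra.smul_def]

lemma natDegree_dyadicBlock_le : (dyadicBlock N n a).natDegree ≤ 2 ^ (n + 1) := by
  refine natDegree_sum_le_of_forall_le _ _ fun k _ => ?_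
  by_cases hk : 2 ^ (n + 1) < k
  · simp [dyadicPhi_eq_zero_of_gt hk]
  · exact (natDegree_C_mul_X_pow_le _ k).trans (not_lt.mp hk)

lemma X_pow_dvd_dyadicBlock : X ^ (2 ^ n / 2) ∣ dyadicBlock N n a := by
  refine dvd_sum fun k _ => ?_
  by_cases hk : k < 2 ^ n / 2
  · have hn : n ≠ 0 := by rintro rfl; simp at hk
    have : 2 ^ n / 2 = 2 ^ (n - 1) := by
      rw [← Nat.pow_div (Nat.one_le_iff_ne_zero.mpr hn) two_pos, pow_one]
    have hφ : dyadicPhi n k = 0 := dyadicPhi_eq_zero_of_le hn (by omega)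
    simp [hφ]
  · exact (pow_dvd_pow X (not_lt.mp hk)).mul_left _

lemma dyadicBlock_eq_zero (hn : N + 2 ≤ n) : dyadicBlock N n a = 0 := by
  refine sum_eq_zero fun k hk => ?_
  have : k < 2 ^ (n - 1) := (Nat.lt_succ_iff.mp (mem_range.mp hk)).trans_lt
    ((Nat.lt_two_pow_self).trans_le (Nat.pow_le_pow_right two_pos (by omega)))
  rw [dyadicPhi_eq_zero_of_le (by omega) this.le, Complex.ofReal_zero, zero_mul, C_0, zero_mul]

lemma sum_aeval_dyadicBlock {𝒜 : Type*} [Ring 𝒜] [Algebra ℂ 𝒜] (x : 𝒜) :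
    ∑ n ∈ range (N + 2), aeval x (dyadicBlock N n a) = ∑ k ∈ range (N + 1), a k • x ^ k := by
  simp_rw [aeval_dyadicBlock]
  rw [sum_comm]
  refine sum_congr rfl fun k hk => ?_
  rw [← sum_smul, ← sum_mul, ← Complex.ofReal_sum,
    sum_range_dyadicPhi (Nat.lt_succ_iff.mp (mem_range.mp hk)), Complex.ofReal_one, one_mul]

end dyadicBlock

lemma dyadic_constant_le (n : ℕ) {M α S : ℝ} (hS : 0 ≤ S) :
    S / ((2 ^ n / 2 : ℕ) + 1) * ((((2 ^ (n + 1) : ℕ) : ℝ) + 1) * (M * (3 * 2 ^ n) ^ α) ^ 2)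
      ≤ 4 * 9 ^ α * M ^ 2 * ((2 : ℝ) ^ (2 * α * n) * S) := by
  have hσ : (((2 ^ (n + 1) : ℕ) : ℝ) + 1) ≤ 4 * ((2 ^ n / 2 : ℕ) + 1) := by
    have : 2 ^ (n + 1) = 2 * 2 ^ n := by ring
    exact_mod_cast (show 2 ^ (n + 1) + 1 ≤ 4 * (2 ^ n / 2 + 1) by omega)
  have hpow : ((3 * (2 : ℝ) ^ n) ^ α) ^ 2 = 9 ^ α * (2 : ℝ) ^ (2 * α * n) := by
    rw [Real.rpow_pow_comm (by positivity), show (3 * (2 : ℝ) ^ n) ^ 2 = 9 * 2 ^ (2 * n) by ring,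
      Real.mul_rpow (by norm_num) (by positivity), ← Real.rpow_natCast_mul zero_le_two]
    push_cast
    ring_nf
  rw [mul_pow, hpow, div_mul_eq_mul_div, div_le_iff₀ (by positivity)]
  calc S * ((((2 ^ (n + 1) : ℕ) : ℝ) + 1) * (M ^ 2 * (9 ^ α * 2 ^ (2 * α * n))))
      ≤ S * ((4 * ((2 ^ n / 2 : ℕ) + 1)) * (M ^ 2 * (9 ^ α * 2 ^ (2 * α * n)))) := by gcongr
    _ = _ := by ring

lemma Continuous.norm_le_of_forall_norm_lt_one {E F : Type*} [NormedAddCommGroup E]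
    [NormedSpace ℝ E] [NormedAddCommGroup F] {f : E → F} (hf : Continuous f) {S : ℝ}
    (hS : ∀ z, ‖z‖ < 1 → ‖f z‖ ≤ S) {z : E} (hz : ‖z‖ ≤ 1) : ‖f z‖ ≤ S := by
  have hclosed : IsClosed {z | ‖f z‖ ≤ S} := isClosed_le (continuous_norm.comp hf) continuous_const
  have hball : ball (0 : E) 1 ⊆ {z | ‖f z‖ ≤ S} := fun z hz => hS z (mem_ball_zero_iff.mp hz)
  have := closure_minimal hball hclosed
  rw [closure_ball 0 one_ne_zero] at this
  exact this (mem_closedBall_zero_iff.mpr hz)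

lemma norm_le_sSup_norm_of_norm_lt_one {g : ℂ → ℂ} (hg : Continuous g) {z : ℂ} (hz : ‖z‖ < 1) :
    ‖g z‖ ≤ sSup {r : ℝ | ∃ z : ℂ, ‖z‖ < 1 ∧ r = ‖g z‖} := by
  obtain ⟨C, hC⟩ := (isCompact_closedBall (0 : ℂ) 1).exists_bound_of_continuousOn hg.continuousOn
  refine le_csSup ⟨C, ?_⟩ ⟨z, hz, rfl⟩
  rintro _ ⟨w, hw, rfl⟩
  exact hC w (mem_closedBall_zero_iff.mpr hw.le)

namespace Polynomial

lemma norm_eval_le_pow_mul {p : ℂ[X]} {σ : ℕ} (hp : X ^ σ ∣ p) {S : ℝ}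
    (hS : ∀ z : ℂ, ‖z‖ < 1 → ‖p.eval z‖ ≤ S) {w : ℂ} (hw : ‖w‖ ≤ 1) :
    ‖p.eval w‖ ≤ ‖w‖ ^ σ * S := by
  obtain ⟨q, rfl⟩ := hp
  have hcircle : ∀ ζ ∈ frontier (ball (0 : ℂ) 1), ‖q.eval ζ‖ ≤ S := by
    intro ζ hζ
    rw [frontier_ball 0 one_ne_zero, mem_sphere_zero_iff_norm] at hζ
    have h : ‖(X ^ σ * q).eval ζ‖ ≤ S :=
      (X ^ σ * q).continuous.norm_le_of_forall_norm_lt_one hS hζ.le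
    rwa [eval_mul, eval_pow, eval_X, norm_mul, norm_pow, hζ, one_pow, one_mul] at h
  have hq : ‖q.eval w‖ ≤ S :=
    Complex.norm_le_of_forall_mem_frontier_norm_le isBounded_ball q.differentiable.diffContOnCl
      hcircle (by rwa [closure_ball 0 one_ne_zero, mem_closedBall_zero_iff])
  rw [eval_mul, eval_pow, eval_X, norm_mul, norm_pow]
  exact mul_le_mul_of_nonneg_left hq (by positivity)

lemma sum_coeff_div_succ_mul_pow_eq_integral (p : ℂ[X]) {n : ℕ} (hn : p.natDegree < n) (w : ℂ) :
    ∑ k ∈ range n, p.coeff k / (k + 1) * w ^ k = ∫ t in (0 : ℝ)..1, p.eval (t * w) := by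
  simp_rw [eval_eq_sum_range' hn, mul_pow]
  rw [intervalIntegral.integral_finsetSum fun k _ =>
    (by fun_prop : Continuous _).intervalIntegrable _ _]
  refine sum_congr rfl fun k _ => ?_
  have : ∀ t : ℝ, p.coeff k * ((t : ℂ) ^ k * w ^ k) = ((t ^ k : ℝ) : ℂ) * (p.coeff k * w ^ k) := by
    intro t; push_cast; ring
  simp_rw [this, intervalIntegral.integral_mul_const, intervalIntegral.integral_ofReal,
    integral_pow]
  push_cast
  ring

lemma norm_sum_coeff_div_succ_mul_pow_le {p : ℂ[X]} {L σ : ℕ} (hL : p.natDegree ≤ L)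
    (hp : X ^ σ ∣ p) {S : ℝ} (hS : ∀ z : ℂ, ‖z‖ < 1 → ‖p.eval z‖ ≤ S) {w : ℂ} (hw : ‖w‖ ≤ 1) :
    ‖∑ k ∈ range (L + 1), p.coeff k / (k + 1) * w ^ k‖ ≤ S / (σ + 1) := by
  have hS0 : 0 ≤ S := (norm_nonneg _).trans (hS 0 (by simp))
  rw [sum_coeff_div_succ_mul_pow_eq_integral p (Nat.lt_succ_of_le hL)]
  calc ‖∫ t in (0 : ℝ)..1, p.eval (t * w)‖ ≤ ∫ t in (0 : ℝ)..1, t ^ σ * S := by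
        refine intervalIntegral.norm_integral_le_of_norm_le zero_le_one
          (Filter.Eventually.of_forall fun t ht => ?_)
          ((by fun_prop : Continuous _).intervalIntegrable _ _)
        have htw : ‖(t : ℂ) * w‖ ≤ t := by
          rw [norm_mul, Complex.norm_real, Real.norm_of_nonneg ht.1.le]
          exact mul_le_of_le_one_right ht.1.le hw
        calc ‖p.eval (t * w)‖ ≤ ‖(t : ℂ) * w‖ ^ σ * S :=
              norm_eval_le_pow_mul hp hS (htw.trans ht.2)
          _ ≤ t ^ σ * S := by gcongr
    _ = S / (σ + 1) := by
        rw [intervalIntegral.integral_mul_const, integral_pow, one_pow, zero_pow σ.succ_ne_zero,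
          sub_zero]
        ring

end Polynomial

lemma sum_range_sum_range_add {M : Type*} [AddCommMonoid M] {L : ℕ} (f : ℕ → M)
    (hf : ∀ k, L < k → f k = 0) :
    ∑ i ∈ range (L + 1), ∑ j ∈ range (L + 1), f (i + j) = ∑ k ∈ range (L + 1), (k + 1) • f k := by
  have htrunc : ∀ i ∈ range (L + 1),
      ∑ j ∈ range (L + 1), f (i + j) = ∑ j ∈ range (L + 1 - i), f (i + j) := by
    refine fun i _ => (sum_subset (range_subset_range.mpr (by omega)) fun j hj hj' => hf _ ?_).symm
    simp only [mem_range] at hj hj'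
    omega
  rw [sum_congr rfl htrunc, ← sum_range_diag_flip (L + 1) fun i j => f (i + j)]
  refine sum_congr rfl fun m _ => ?_
  rw [sum_congr rfl fun k hk => by rw [Nat.add_sub_cancel' (Nat.lt_succ_iff.mp (mem_range.mp hk))],
    sum_const, card_range]

namespace IsPrimitiveRoot

variable {ζ : ℂ} {R : ℕ}

lemma sum_pow_mul_conj_pow (hζ : IsPrimitiveRoot ζ R) {a b : ℕ} (ha : a < R) (hb : b < R) :
    ∑ t ∈ range R, (ζ ^ t) ^ a * conj ((ζ ^ t) ^ b) = if a = b then (R : ℂ) else 0 := by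
  have hζ0 : ζ ≠ 0 := hζ.ne_zero (by omega)
  have hterm : ∀ t, (ζ ^ t) ^ a * conj ((ζ ^ t) ^ b) = (ζ ^ ((a : ℤ) - b)) ^ t := by
    intro t
    rw [← Complex.inv_eq_conj (by rw [norm_pow, norm_pow, hζ.norm'_eq_one (by omega), one_pow,
      one_pow]), zpow_sub₀ hζ0, zpow_natCast, zpow_natCast, div_pow, div_eq_mul_inv]
    ring
  simp_rw [hterm]
  split_ifs with hab
  · simp [hab]
  · have hne : ζ ^ ((a : ℤ) - b) ≠ 1 := by
      rw [Ne, hζ.zpow_eq_one_iff_dvd]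
      exact fun h => hab (by have := Int.eq_zero_of_abs_lt_dvd h (by rw [abs_lt]; omega); omega)
    have hpow : (ζ ^ ((a : ℤ) - b)) ^ R = 1 := by
      rw [← zpow_natCast, ← zpow_mul, mul_comm, zpow_mul, zpow_natCast, hζ.pow_eq_one, one_zpow]
    rw [geom_sum_eq hne, hpow, sub_self, zero_div]

variable {H : Type*} [NormedAddCommGroup H] [InnerProductSpace ℂ H]

lemma sum_norm_sq_sum_pow_smul (hζ : IsPrimitiveRoot ζ R) {L : ℕ} (hL : L < R) (u : ℕ → H) :
    ∑ t ∈ range R, ‖∑ j ∈ range (L + 1), (ζ ^ t) ^ j • u j‖ ^ 2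
      = R * ∑ j ∈ range (L + 1), ‖u j‖ ^ 2 := by
  have hinner : ∀ x : H, ((‖x‖ ^ 2 : ℝ) : ℂ) = inner ℂ x x := fun x => by
    rw [inner_self_eq_norm_sq_to_K]; push_cast; rfl
  apply Complex.ofReal_injective
  push_cast
  simp_rw [← Complex.ofReal_pow, hinner, sum_inner, inner_sum, inner_smul_left, inner_smul_right,
    mul_sum]
  rw [sum_comm]
  refine sum_congr rfl fun i hi => ?_
  rw [sum_comm]
  have hiR : i < R := by rw [mem_range] at hi; omega
  calc ∑ j ∈ range (L + 1), ∑ t ∈ range R, conj ((ζ ^ t) ^ i) * ((ζ ^ t) ^ j * inner ℂ (u i) (u j))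
      = ∑ j ∈ range (L + 1), (if j = i then (R : ℂ) else 0) * inner ℂ (u i) (u j) := by
        refine sum_congr rfl fun j hj => ?_
        have hjR : j < R := by rw [mem_range] at hj; omega
        rw [← hζ.sum_pow_mul_conj_pow hjR hiR, sum_mul]
        exact sum_congr rfl fun t _ => by ring
    _ = R * inner ℂ (u i) (u i) := by simp [hi]

lemma sum_sum_mul_conj_pow_mul_pow (hζ : IsPrimitiveRoot ζ R) {L m : ℕ} (hL : L < R) (hm : m < R)
    (γ : ℕ → ℂ) (hγ : ∀ k, L < k → γ k = 0) :
    ∑ t ∈ range R, (∑ k ∈ range (L + 1), γ k * conj ((ζ ^ t) ^ k)) * (ζ ^ t) ^ m = R * γ m := by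
  simp_rw [sum_mul]
  rw [sum_comm]
  calc ∑ k ∈ range (L + 1), ∑ t ∈ range R, γ k * conj ((ζ ^ t) ^ k) * (ζ ^ t) ^ m
      = ∑ k ∈ range (L + 1), γ k * if m = k then (R : ℂ) else 0 := by
        refine sum_congr rfl fun k hk => ?_
        rw [← hζ.sum_pow_mul_conj_pow hm (by rw [mem_range] at hk; omega), mul_sum]
        exact sum_congr rfl fun t _ => by ring
    _ = R * γ m := by
        simp only [mul_ite, mul_zero, sum_ite_eq, mem_range]
        split_ifs with h
        · ring
        · rw [hγ m (by omega), mul_zero]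

lemma smul_aeval_eq_sum {𝒜 : Type*} [Ring 𝒜] [Algebra ℂ 𝒜] (hζ : IsPrimitiveRoot ζ R) {L : ℕ}
    (hL : 2 * L < R) {p : ℂ[X]} (hp : p.natDegree ≤ L) (a : 𝒜) :
    (R : ℂ) • aeval a p = ∑ t ∈ range R,
      (∑ k ∈ range (L + 1), p.coeff k / (k + 1) * conj ((ζ ^ t) ^ k)) •
        ((∑ j ∈ range (L + 1), (ζ ^ t) ^ j • a ^ j) *
          ∑ j ∈ range (L + 1), (ζ ^ t) ^ j • a ^ j) := by
  set γ : ℕ → ℂ := fun k => p.coeff k / (k + 1)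
  have hγ : ∀ k, L < k → γ k = 0 := fun k hk => by
    simp [γ, coeff_eq_zero_of_natDegree_lt (hp.trans_lt hk)]
  have hcoeff : ∀ k, p.coeff k • a ^ k = (k + 1) • γ k • a ^ k := fun k => by
    rw [← Nat.cast_smul_eq_nsmul ℂ, smul_smul]
    congr 1
    simp only [γ]
    push_cast
    field_simp
  symm
  calc _ = ∑ i ∈ range (L + 1), ∑ j ∈ range (L + 1), ∑ t ∈ range R,
        ((∑ k ∈ range (L + 1), γ k * conj ((ζ ^ t) ^ k)) * (ζ ^ t) ^ (i + j)) • a ^ (i + j) := by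
        simp_rw [sum_mul_sum, smul_mul_smul_comm, ← pow_add, smul_sum, smul_smul]
        rw [sum_comm]
        exact sum_congr rfl fun i _ => sum_comm
    _ = ∑ i ∈ range (L + 1), ∑ j ∈ range (L + 1), (R : ℂ) • γ (i + j) • a ^ (i + j) := by
        refine sum_congr rfl fun i hi => sum_congr rfl fun j hj => ?_
        simp only [mem_range] at hi hj
        rw [← sum_smul, hζ.sum_sum_mul_conj_pow_mul_pow (by omega) (by omega) γ hγ, smul_smul]
    _ = (R : ℂ) • aeval a p := by
        simp_rw [← smul_sum]
        rw [sum_range_sum_range_add (fun k => γ k • a ^ k) fun k hk => by simp [hγ k hk],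
          aeval_eq_sum_range' (Nat.lt_succ_of_le hp)]
        simp_rw [hcoeff]

lemma sum_norm_sq_sum_pow_smul_apply_le (hζ : IsPrimitiveRoot ζ R) {L : ℕ} (hL : L < R)
    {B : ℕ → H →L[ℂ] H} {A : ℝ} (hB : ∀ j ≤ L, ‖B j‖ ≤ A) (x : H) :
    ∑ t ∈ range R, ‖(∑ j ∈ range (L + 1), (ζ ^ t) ^ j • B j) x‖ ^ 2
      ≤ R * ((L + 1) * A ^ 2) * ‖x‖ ^ 2 := by
  simp only [_root_.sum_apply, smul_apply]
  rw [hζ.sum_norm_sq_sum_pow_smul hL, mul_assoc]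
  gcongr
  calc ∑ j ∈ range (L + 1), ‖B j x‖ ^ 2 ≤ ∑ _j ∈ range (L + 1), (A * ‖x‖) ^ 2 := by
        refine sum_le_sum fun j hj => ?_
        have hBj := hB j (Nat.lt_succ_iff.mp (mem_range.mp hj))
        gcongr
        exact (B j).le_of_opNorm_le hBj x
    _ = (L + 1) * A ^ 2 * ‖x‖ ^ 2 := by
          rw [sum_const, card_range, nsmul_eq_mul]
          push_cast
          ring

end IsPrimitiveRoot

section HilbertSpace

variable {H : Type*} [NormedAddCommGroup H] [InnerProductSpace ℂ H] [CompleteSpace H]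

lemma norm_le_of_smul_eq_sum_smul_mul {ι : Type*} (s : Finset ι) {P : H →L[ℂ] H} {g : ι → ℂ}
    {B C : ι → H →L[ℂ] H} {r K D : ℝ} (hr : 0 < r) (hK : 0 ≤ K) (hD : 0 ≤ D)
    (hP : (r : ℂ) • P = ∑ t ∈ s, g t • (B t * C t)) (hg : ∀ t ∈ s, ‖g t‖ ≤ K)
    (hB : ∀ y, ∑ t ∈ s, ‖adjoint (B t) y‖ ^ 2 ≤ r * D * ‖y‖ ^ 2)
    (hC : ∀ x, ∑ t ∈ s, ‖C t x‖ ^ 2 ≤ r * D * ‖x‖ ^ 2) :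
    ‖P‖ ≤ K * D := by
  have hrD : 0 ≤ r * D := by positivity
  have hbilin : ∀ x y, ‖inner ℂ y (P x)‖ ≤ K * D * ‖x‖ * ‖y‖ := by
    intro x y
    refine le_of_mul_le_mul_left ?_ hr
    calc r * ‖inner ℂ y (P x)‖ = ‖∑ t ∈ s, g t * inner ℂ (adjoint (B t) y) (C t x)‖ := by
          have : r * ‖inner ℂ y (P x)‖ = ‖inner ℂ y (((r : ℂ) • P) x)‖ := by
            simp [abs_of_pos hr]
          rw [this, hP]
          simp [adjoint_inner_left]
      _ ≤ ∑ t ∈ s, K * (‖adjoint (B t) y‖ * ‖C t x‖) := by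
          refine (norm_sum_le _ _).trans (sum_le_sum fun t ht => ?_)
          rw [norm_mul]
          gcongr
          exacts [hg t ht, norm_inner_le_norm _ _]
      _ ≤ K * (√(∑ t ∈ s, ‖adjoint (B t) y‖ ^ 2) * √(∑ t ∈ s, ‖C t x‖ ^ 2)) := by
          rw [← mul_sum]
          exact mul_le_mul_of_nonneg_left (Real.sum_mul_le_sqrt_mul_sqrt _ _ _) hK
      _ ≤ K * (√(r * D * ‖y‖ ^ 2) * √(r * D * ‖x‖ ^ 2)) := by gcongr <;> simp only [hB, hC]
      _ = r * (K * D * ‖x‖ * ‖y‖) := by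
          rw [Real.sqrt_mul hrD, Real.sqrt_mul hrD, Real.sqrt_sq (norm_nonneg _),
            Real.sqrt_sq (norm_nonneg _)]
          linear_combination (K * ‖x‖ * ‖y‖) * Real.mul_self_sqrt hrD
  refine opNorm_le_bound _ (mul_nonneg hK hD) fun x => ?_
  rcases (norm_nonneg (P x)).eq_or_lt with h | h
  · rw [← h]; positivity
  · refine le_of_mul_le_mul_right ?_ h
    simpa [← sq, inner_self_eq_norm_sq_to_K] using hbilin x (P x)

theorem norm_aeval_le_of_X_pow_dvd (T : H →L[ℂ] H) {L σ : ℕ} {A S : ℝ}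
    (hT : ∀ j ≤ L, ‖T ^ j‖ ≤ A) {p : ℂ[X]} (hL : p.natDegree ≤ L) (hσ : X ^ σ ∣ p)
    (hS : ∀ z : ℂ, ‖z‖ < 1 → ‖p.eval z‖ ≤ S) :
    ‖aeval T p‖ ≤ S / (σ + 1) * ((L + 1) * A ^ 2) := by
  obtain ⟨ζ, hζ⟩ : ∃ ζ : ℂ, IsPrimitiveRoot ζ (2 * L + 1) :=
    ⟨_, Complex.isPrimitiveRoot_exp _ (by omega)⟩
  have hζ' : IsPrimitiveRoot (conj ζ) (2 * L + 1) := hζ.map_of_injective (starRingEnd ℂ).injective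
  have hS0 : 0 ≤ S := (norm_nonneg _).trans (hS 0 (by simp))
  have hA0 : 0 ≤ A := (norm_nonneg _).trans (hT 0 (Nat.zero_le L))
  refine norm_le_of_smul_eq_sum_smul_mul (range (2 * L + 1)) (r := ↑(2 * L + 1)) (by positivity)
    (by positivity) (by positivity)
    (by rw [Complex.ofReal_natCast]; exact hζ.smul_aeval_eq_sum (by omega) hL T) (fun t _ => ?_)
    (fun y => ?_) (hζ.sum_norm_sq_sum_pow_smul_apply_le (by omega) hT)
  · have hw : ‖conj (ζ ^ t)‖ ≤ 1 := by
      rw [Complex.norm_conj, norm_pow, hζ.norm'_eq_one (by omega), one_pow]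
    simpa only [map_pow] using Polynomial.norm_sum_coeff_div_succ_mul_pow_le hL hσ hS hw
  · have hadj : ∀ t, adjoint (∑ j ∈ range (L + 1), (ζ ^ t) ^ j • T ^ j)
        = ∑ j ∈ range (L + 1), (conj ζ ^ t) ^ j • adjoint (T ^ j) := fun t => by
      simp [map_sum, map_smulₛₗ]
    simp_rw [hadj]
    exact hζ'.sum_norm_sq_sum_pow_smul_apply_le (by omega)
      (fun j hj => (adjoint.norm_map (T ^ j)).trans_le (hT j hj)) y

lemma norm_aeval_dyadicBlock_le (T : H →L[ℂ] H) {M α : ℝ} (hM : 0 ≤ M) (hα : 0 ≤ α)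
    (hT : ∀ n : ℕ, ‖T ^ n‖ ≤ M * (1 + (n : ℝ)) ^ α) (N n : ℕ) (a : ℕ → ℂ) :
    ‖aeval T (dyadicBlock N n a)‖ ≤ 4 * 9 ^ α * M ^ 2 * ((2 : ℝ) ^ (2 * α * n) *
      sSup {r : ℝ | ∃ z : ℂ, ‖z‖ < 1 ∧ r = ‖(dyadicBlock N n a).eval z‖}) := by
  have hT' : ∀ j ≤ 2 ^ (n + 1), ‖T ^ j‖ ≤ M * (3 * 2 ^ n) ^ α := fun j hj => by
    refine (hT j).trans (mul_le_mul_of_nonneg_left (Real.rpow_le_rpow (by positivity) ?_ hα) hM)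
    have : (j : ℝ) ≤ 2 * 2 ^ n := by exact_mod_cast hj.trans_eq (by ring)
    linarith [one_le_pow₀ (M₀ := ℝ) (a := 2) (n := n) one_le_two]
  have hS := fun z (hz : ‖z‖ < 1) =>
    norm_le_sSup_norm_of_norm_lt_one (dyadicBlock N n a).continuous hz
  exact (norm_aeval_le_of_X_pow_dvd T hT' (natDegree_dyadicBlock_le N n a)
    (X_pow_dvd_dyadicBlock N n a) hS).trans
    (dyadic_constant_le n ((norm_nonneg _).trans (hS 0 (by simp))))

end HilbertSpace

theorem peller_discrete :
    ∃ c : ℝ, 0 ≤ c ∧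
      ∀ (H : Type*) [NormedAddCommGroup H] [InnerProductSpace ℂ H] [CompleteSpace H],
      ∀ T : H →L[ℂ] H,
      ∀ M α : ℝ, 1 ≤ M → 0 ≤ α →
        (∀ n : ℕ, ‖T ^ n‖ ≤ M * (1 + (n : ℝ)) ^ α) →
      ∀ (N : ℕ) (a : ℕ → ℂ),
        ‖∑ k ∈ Finset.range (N + 1), a k • T ^ k‖ ≤
          c * 9 ^ α * M ^ 2 *
            ∑' n : ℕ, (2 : ℝ) ^ (2 * α * (n : ℝ)) *
              sSup {r : ℝ | ∃ z : ℂ, ‖z‖ < 1 ∧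
                r = ‖(∑ k ∈ Finset.range (N + 1),
                      (dyadicPhi n k : ℂ) * a k * z ^ k)‖} := by
  refine ⟨4, by norm_num, fun H _ _ _ T M α hM hα hT N a => ?_⟩
  simp_rw [← eval_dyadicBlock, ← sum_aeval_dyadicBlock]
  rw [tsum_eq_sum (s := range (N + 2)) fun n hn => by
    simp [dyadicBlock_eq_zero N n a (by simpa using hn), show ∃ z : ℂ, ‖z‖ < 1 from ⟨0, by simp⟩],
    mul_sum]
  exact (norm_sum_le _ _).trans (sum_le_sum fun n _ =>
    norm_aeval_dyadicBlock_le T (by linarith) hα hT N n a)
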